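/- Lower bound via counting inequalities: let C ⊆ GF(q^m)^n be a code with rank covering radius ρ, let u be any vector at rank distance δ from C (0 ≤ δ ≤ ρ), and let A_i be the number of codewords at rank distance i from u. Then A_i = 0 for i < δ, A_δ ≥ 1, A_i ≤ N_i for all i (where N_i is the number of vectors of rank i), Σ_i A_i = |C|, and for every 0 ≤ r ≤ n: Σ_{i=0}^{n} A_i · Σ_{s=0}^{ρ} J(r, s, i) ≥ N_r, where J(r, s, i) is the number of vectors at rank distance r from u and rank distance s from a fixed vector at rank distance i from u. -/

import Mathlib

/-- The rank weight of a vector `x ∈ GF(q^m)^n`: the dimension over `GF(q)` of the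
`GF(q)`-span of the coordinates of `x`. -/
noncomputable def rankWeight (Fq : Type*) [Field Fq] {Fqm : Type*} [Field Fqm] [Algebra Fq Fqm]
    {n : ℕ} (x : Fin n → Fqm) : ℕ :=
  Module.finrank Fq (Submodule.span Fq (Set.range x))

/-- The Gaussian binomial coefficient `[n choose r]_q`: the number of `r`-dimensional
subspaces of `GF(q)^n`. -/
noncomputable def qBinom (Fq : Type*) [Field Fq] (n r : ℕ) : ℕ :=
  Nat.card {W : Submodule Fq (Fin n → Fq) // Module.finrank Fq W = r}

/-!
Vectors of rank weight `r` in `W^n` correspond to `K`-linear maps `K^n → W` of rank `r`.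
Grouping these by kernel, each fibre is the set of injections of an `r`-dimensional space
into `W`, i.e. of linearly independent `r`-tuples, and kernels of dimension `n - r` are in
bijection with subspaces of dimension `r` by duality; this gives
`N_r = [n choose r]_q ∏_{j<r} (q^m - q^j)`. The covering inequality is then a double count:
every vector of the sphere of radius `r` about `u` lies in some ball of radius `ρ` about a
codeword `c`, and the part of the sphere in that ball has `Σ_{s ≤ ρ} J r s (d(u, c))`
elements.
-/

open Module Finset

theorem Finset.card_le_sum_card_filter_of_forall_exists {α β : Type*} [DecidableEq α]
    {s : Finset α} {t : Finset β} (P : α → β → Prop) [∀ a b, Decidable (P a b)]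
    (h : ∀ a ∈ s, ∃ b ∈ t, P a b) : #s ≤ ∑ b ∈ t, #{a ∈ s | P a b} := by
  refine (card_le_card fun a ha => mem_biUnion.2 ?_).trans card_biUnion_le
  obtain ⟨b, hb, hab⟩ := h a ha
  exact ⟨b, hb, mem_filter.2 ⟨ha, hab⟩⟩

theorem Finset.sum_comp_eq_sum_card_filter_mul {ι κ : Type*} [DecidableEq κ] {s : Finset ι}
    {t : Finset κ} {g : ι → κ} (h : ∀ i ∈ s, g i ∈ t) (f : κ → ℕ) :
    ∑ i ∈ s, f (g i) = ∑ j ∈ t, #{i ∈ s | g i = j} * f j := by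
  simp only [← sum_fiberwise_of_maps_to' h f, sum_const, smul_eq_mul]

section Counting

variable {K V W : Type*} [Field K] [AddCommGroup V] [Module K V] [AddCommGroup W] [Module K W]

theorem card_linearIndependent_eq_prod_range [Fintype K] [Finite W] (k : ℕ) :
    Nat.card {s : Fin k → W // LinearIndependent K s} =
      ∏ j ∈ range k, (Fintype.card K ^ finrank K W - Fintype.card K ^ j) := by
  by_cases hk : k ≤ finrank K W
  · rw [card_linearIndependent hk]
    exact Fin.prod_univ_eq_prod_range (fun j => Fintype.card K ^ finrank K W - Fintype.card K ^ j) k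
  · rw [prod_eq_zero (mem_range.2 (not_le.1 hk)) (Nat.sub_self (Fintype.card K ^ finrank K W)),
      Nat.card_eq_zero]
    left
    exact ⟨fun ⟨s, hs⟩ => hk (by simpa using hs.fintype_card_le_finrank)⟩

theorem card_injective_linearMap [Fintype K] [Finite W] [FiniteDimensional K V] :
    Nat.card {g : V →ₗ[K] W // Function.Injective g} =
      ∏ j ∈ range (finrank K V), (Fintype.card K ^ finrank K W - Fintype.card K ^ j) := by
  let b := finBasis K V
  have hli : ∀ s : Fin (finrank K V) → W,
      LinearIndependent K s ↔ Function.Injective (b.constr K s) := fun s =>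
    ⟨b.injective_constr_of_linearIndependent, fun hg => by
      simpa [Function.comp_def] using b.linearIndependent.map' _ (LinearMap.ker_eq_bot.2 hg)⟩
  rw [← card_linearIndependent_eq_prod_range]
  exact Nat.card_congr (Equiv.subtypeEquiv (b.constr K).toEquiv hli).symm

def Submodule.kerEqEquivInjective (p : Submodule K V) :
    {f : V →ₗ[K] W // LinearMap.ker f = p} ≃
      {g : V ⧸ p →ₗ[K] W // Function.Injective g} where
  toFun f := ⟨p.liftQ f.1 f.2.ge, by
    rw [← LinearMap.ker_eq_bot, Submodule.ker_liftQ, f.2, Submodule.mkQ_map_self]⟩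
  invFun g := ⟨g.1.comp p.mkQ, by
    rw [LinearMap.ker_comp, LinearMap.ker_eq_bot.2 g.2, Submodule.comap_bot, Submodule.ker_mkQ]⟩
  left_inv f := Subtype.ext (Submodule.liftQ_mkQ _ _ _)
  right_inv g := Subtype.ext (Submodule.linearMap_qext p (Submodule.liftQ_mkQ _ _ _))

theorem card_linearMap_finrank_ker_eq [Fintype K] [Finite V] [Finite W] (k : ℕ) :
    Nat.card {f : V →ₗ[K] W // finrank K (LinearMap.ker f) = k} =
      Nat.card {p : Submodule K V // finrank K p = k} *
        ∏ j ∈ range (finrank K V - k), (Fintype.card K ^ finrank K W - Fintype.card K ^ j) := by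
  have : Fintype {p : Submodule K V // finrank K p = k} := Fintype.ofFinite _
  have : Finite (V →ₗ[K] W) := Finite.of_injective _ DFunLike.coe_injective
  rw [← Nat.card_congr (Equiv.sigmaSubtypeFiberEquivSubtype LinearMap.ker
      (p := fun f : V →ₗ[K] W => finrank K (LinearMap.ker f) = k)
      (q := fun p : Submodule K V => finrank K p = k) fun _ => Iff.rfl),
    Nat.card_sigma, Nat.card_eq_fintype_card (α := {p : Submodule K V // _}), ← Finset.card_univ,
    ← smul_eq_mul, ← sum_const]
  refine sum_congr rfl fun p _ => ?_
  rw [Nat.card_congr p.1.kerEqEquivInjective, card_injective_linearMap,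
    Submodule.finrank_quotient, p.2]

theorem card_submodule_finrank_eq_sub [FiniteDimensional K V] {k : ℕ} (hk : k ≤ finrank K V) :
    Nat.card {p : Submodule K V // finrank K p = finrank K V - k} =
      Nat.card {p : Submodule K V // finrank K p = k} := by
  let e : Module.Dual K V ≃ₗ[K] V := LinearEquiv.ofFinrankEq _ _ Subspace.dual_finrank_eq
  let φ : Submodule K V ≃ Submodule K V :=
    (Subspace.orderIsoFiniteDimensional (K := K) (V := V)).toEquiv.trans
      (OrderDual.ofDual.trans (Submodule.orderIsoMapComap e).toEquiv)
  refine Nat.card_congr (Equiv.subtypeEquiv φ fun p => ?_)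
  have hφ : finrank K (φ p) + finrank K p = finrank K V := by
    change finrank K (p.dualAnnihilator.map (e : Dual K V →ₗ[K] V)) + _ = _
    rw [LinearEquiv.finrank_map_eq, add_comm, Subspace.finrank_add_finrank_dualAnnihilator_eq]
  have := p.finrank_le
  omega

end Counting

section RankWeight

variable {K W : Type*} [Field K] [Field W] [Algebra K W] {n : ℕ}

theorem rankWeight_le (x : Fin n → W) : rankWeight K x ≤ n := by
  simpa [rankWeight, Set.finrank] using finrank_range_le_card (R := K) x

theorem rankWeight_sub_comm (x y : Fin n → W) : rankWeight K (x - y) = rankWeight K (y - x) := by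
  rw [← neg_sub, rankWeight, rankWeight, ← Set.neg_range', Submodule.span_neg]

theorem card_rankWeight_eq [Fintype K] [Finite W] {r : ℕ} (hr : r ≤ n) :
    Nat.card {x : Fin n → W // rankWeight K x = r} =
      qBinom K n r * ∏ j ∈ range r, (Fintype.card K ^ finrank K W - Fintype.card K ^ j) := by
  let constr := (Pi.basisFun K (Fin n)).constr K (M' := W)
  have hker : ∀ x, rankWeight K x = r ↔ finrank K (LinearMap.ker (constr x)) = n - r := by
    intro x
    have := LinearMap.finrank_range_add_finrank_ker (constr x)
    rw [Basis.constr_range, finrank_fin_fun] at this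
    rw [rankWeight]
    omega
  have hcodim := card_submodule_finrank_eq_sub (K := K) (V := Fin n → K) (k := r) (by simpa)
  rw [finrank_fin_fun] at hcodim
  rw [Nat.card_congr (Equiv.subtypeEquiv constr.toEquiv
    (q := fun f => finrank K (LinearMap.ker f) = n - r) hker), card_linearMap_finrank_ker_eq,
    hcodim, finrank_fin_fun, Nat.sub_sub_self hr, qBinom]

theorem card_rankWeight_sub_eq [Fintype K] [Fintype W] {r : ℕ} (hr : r ≤ n)
    (u : Fin n → W) :
    #{x | rankWeight K (x - u) = r} =
      qBinom K n r * ∏ j ∈ range r, (Fintype.card K ^ finrank K W - Fintype.card K ^ j) := by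
  rw [← card_rankWeight_eq hr, ← Fintype.card_subtype, ← Nat.card_eq_fintype_card]
  exact Nat.card_congr (Equiv.subtypeEquiv (Equiv.subRight u) fun _ => Iff.rfl)

theorem card_filter_rankWeight_sub_le [Fintype K] [Fintype W]
    (C : Finset (Fin n → W)) (u : Fin n → W) (i : ℕ) :
    #{c ∈ C | rankWeight K (u - c) = i} ≤
      qBinom K n i * ∏ j ∈ range i, (Fintype.card K ^ finrank K W - Fintype.card K ^ j) := by
  by_cases hi : i ≤ n
  · rw [← card_rankWeight_sub_eq hi u]
    refine card_le_card fun c hc => ?_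
    simpa [rankWeight_sub_comm u c] using (mem_filter.1 hc).2
  · rw [card_eq_zero.2 (filter_eq_empty_iff.2 fun c _ (hci : rankWeight K (u - c) = i) =>
      hi (hci ▸ rankWeight_le (u - c)))]
    exact Nat.zero_le _

theorem card_sphere_le_sum_card_sphere_inter_sphere [Fintype W] [DecidableEq W] {ρ : ℕ}
    {C : Finset (Fin n → W)}
    (hcov : ∀ x, ∃ c ∈ C, rankWeight K (x - c) ≤ ρ) (u : Fin n → W) (r : ℕ) :
    #{x | rankWeight K (x - u) = r} ≤
      ∑ c ∈ C, ∑ s ∈ range (ρ + 1),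
        #{x | rankWeight K (x - u) = r ∧ rankWeight K (x - c) = s} := by
  refine (card_le_sum_card_filter_of_forall_exists (fun x c => rankWeight K (x - c) ≤ ρ)
    fun x _ => hcov x).trans_eq (sum_congr rfl fun c _ => ?_)
  rw [card_eq_sum_card_fiberwise (f := fun x => rankWeight K (x - c)) (t := range (ρ + 1))
    fun x hx => mem_range_succ_iff.2 (mem_filter.1 hx).2]
  refine sum_congr rfl fun s hs => congrArg card (ext fun x => ?_)
  simp only [mem_filter, mem_univ, true_and]
  have hsρ := mem_range_succ_iff.1 hs
  exact ⟨fun ⟨⟨hr, _⟩, hxs⟩ => ⟨hr, hxs⟩, fun ⟨hr, hxs⟩ => ⟨⟨hr, hxs ▸ hsρ⟩, hxs⟩⟩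

end RankWeight

theorem stmt18_general (q m n ρ δ : ℕ) (Fq Fqm : Type*) [Field Fq] [Fintype Fq] [Field Fqm]
    [Fintype Fqm] [Algebra Fq Fqm] (hq : Fintype.card Fq = q)
    (hm : Module.finrank Fq Fqm = m)
    (C : Finset (Fin n → Fqm))
    (hcov : ∀ x : Fin n → Fqm, ∃ c ∈ C, rankWeight Fq (x - c) ≤ ρ)
    (u : Fin n → Fqm)
    (hδ1 : ∃ c ∈ C, rankWeight Fq (u - c) = δ)
    (hδ2 : ∀ c ∈ C, δ ≤ rankWeight Fq (u - c))
    (A : ℕ → ℕ)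
    (hA : ∀ i, A i = Nat.card {c : Fin n → Fqm // c ∈ C ∧ rankWeight Fq (u - c) = i})
    (J : ℕ → ℕ → ℕ → ℕ)
    (hJ : ∀ r s i (z : Fin n → Fqm), rankWeight Fq (u - z) = i →
      J r s i = Nat.card {x : Fin n → Fqm //
        rankWeight Fq (x - u) = r ∧ rankWeight Fq (x - z) = s}) :
    (∀ i, i < δ → A i = 0) ∧ 1 ≤ A δ ∧
    (∀ i, A i ≤ qBinom Fq n i * ∏ j ∈ Finset.range i, (q ^ m - q ^ j)) ∧
    (∑ i ∈ Finset.range (n + 1), A i = C.card) ∧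
    (∀ r, r ≤ n →
      qBinom Fq n r * ∏ j ∈ Finset.range r, (q ^ m - q ^ j) ≤
        ∑ i ∈ Finset.range (n + 1), A i * ∑ s ∈ Finset.range (ρ + 1), J r s i) := by
  classical
  subst hq hm
  have hA' (i : ℕ) : A i = #{c ∈ C | rankWeight Fq (u - c) = i} := by
    rw [hA, ← Nat.card_eq_finsetCard]
    exact Nat.card_congr (Equiv.subtypeEquivRight fun c => by rw [mem_filter])
  have hJ' (r s : ℕ) (c : Fin n → Fqm) : J r s (rankWeight Fq (u - c)) =
      #{x | rankWeight Fq (x - u) = r ∧ rankWeight Fq (x - c) = s} := by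
    rw [hJ r s _ c rfl, Nat.card_eq_fintype_card, Fintype.card_subtype]
  have hmaps : ∀ c ∈ C, rankWeight Fq (u - c) ∈ range (n + 1) :=
    fun c _ => mem_range_succ_iff.2 (rankWeight_le _)
  refine ⟨fun i hi => ?_, ?_, fun i => hA' i ▸ card_filter_rankWeight_sub_le C u i, ?_,
    fun r hr => ?_⟩
  · rw [hA', card_eq_zero, filter_eq_empty_iff]
    exact fun c hc hci => absurd (hδ2 c hc) (by omega)
  · obtain ⟨c, hc, hcδ⟩ := hδ1
    rw [hA', one_le_card]
    exact ⟨c, mem_filter.2 ⟨hc, hcδ⟩⟩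
  · rw [card_eq_sum_card_fiberwise hmaps]
    exact sum_congr rfl fun i _ => hA' i
  · calc _ = #{x | rankWeight Fq (x - u) = r} := (card_rankWeight_sub_eq hr u).symm
      _ ≤ ∑ c ∈ C, ∑ s ∈ range (ρ + 1),
            #{x | rankWeight Fq (x - u) = r ∧ rankWeight Fq (x - c) = s} :=
        card_sphere_le_sum_card_sphere_inter_sphere hcov u r
      _ = ∑ c ∈ C, ∑ s ∈ range (ρ + 1), J r s (rankWeight Fq (u - c)) := by simp only [hJ']
      _ = _ := by
        rw [sum_comp_eq_sum_card_filter_mul hmaps fun i => ∑ s ∈ range (ρ + 1), J r s i]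
        simp only [hA']

/-- Counting inequalities for covering codes: if `C` has rank covering radius at most `ρ`,
`u` is at rank distance `δ ≤ ρ` from `C`, `A i` counts codewords at rank distance `i` from
`u`, `N i = [n choose i]_q ∏_{j<i}(q^m - q^j)` counts vectors of rank `i`, and `J r s i` is
the intersection number (number of vectors at distance `r` from `u` and `s` from any fixed
vector at distance `i` from `u`), then `A i = 0` for `i < δ`, `A δ ≥ 1`, `A i ≤ N i`,
`Σ_{i≤n} A i = |C|`, and `Σ_{i≤n} A i · Σ_{s≤ρ} J r s i ≥ N r` for all `r ≤ n`. -/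
theorem stmt18 (q m n ρ δ : ℕ) (Fq Fqm : Type*) [Field Fq] [Fintype Fq] [Field Fqm]
    [Fintype Fqm] [Algebra Fq Fqm] (hq : Fintype.card Fq = q)
    (hm : Module.finrank Fq Fqm = m) (hnm : n ≤ m) (hδρ : δ ≤ ρ)
    (C : Finset (Fin n → Fqm))
    (hcov : ∀ x : Fin n → Fqm, ∃ c ∈ C, rankWeight Fq (x - c) ≤ ρ)
    (u : Fin n → Fqm)
    (hδ1 : ∃ c ∈ C, rankWeight Fq (u - c) = δ)
    (hδ2 : ∀ c ∈ C, δ ≤ rankWeight Fq (u - c))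
    (A : ℕ → ℕ)
    (hA : ∀ i, A i = Nat.card {c : Fin n → Fqm // c ∈ C ∧ rankWeight Fq (u - c) = i})
    (J : ℕ → ℕ → ℕ → ℕ)
    (hJ : ∀ r s i (z : Fin n → Fqm), rankWeight Fq (u - z) = i →
      J r s i = Nat.card {x : Fin n → Fqm //
        rankWeight Fq (x - u) = r ∧ rankWeight Fq (x - z) = s}) :
    (∀ i, i < δ → A i = 0) ∧ 1 ≤ A δ ∧
    (∀ i, A i ≤ qBinom Fq n i * ∏ j ∈ Finset.range i, (q ^ m - q ^ j)) ∧
    (∑ i ∈ Finset.range (n + 1), A i = C.card) ∧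
    (∀ r, r ≤ n →
      qBinom Fq n r * ∏ j ∈ Finset.range r, (q ^ m - q ^ j) ≤
        ∑ i ∈ Finset.range (n + 1), A i * ∑ s ∈ Finset.range (ρ + 1), J r s i) :=
  stmt18_general q m n ρ δ Fq Fqm hq hm C hcov u hδ1 hδ2 A hA J hJ
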